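/- Let f : ℕ → ℕ be a function with the property that for all n, x, y ∈ ℕ, if x ≡ y (mod n) then f(x) ≡ f(y) (mod n). Then f is continuous as a map from the Macías space M(ℕ) to itself if and only if for every prime number p, the preimage f⁻¹(σ_p) equals σ_p, equals all of ℕ, or is empty. -/
import Mathlib

open Topology

/-- For `n` a positive natural, `σ_n = {m ∈ ℕ⁺ : gcd(n,m) = 1}`. -/
def sigmaSet (n : ℕ+) : Set ℕ+ := {m : ℕ+ | Nat.Coprime (n : ℕ) (m : ℕ)}

/-- The Macías topology `τ_M` on the positive naturals, generated by the sets `σ_n`. -/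
def tauM : TopologicalSpace ℕ+ :=
  TopologicalSpace.generateFrom (Set.range sigmaSet)

-- gcd only depends on the residue class
lemma gcd_congr_mod {n a b : ℕ} (h : a ≡ b [MOD n]) : Nat.gcd n a = Nat.gcd n b := by
  rw [Nat.gcd_rec n a, Nat.gcd_rec n b, show a % n = b % n from h]

lemma coprime_congr_mod {n a b : ℕ} (h : a ≡ b [MOD n]) :
    Nat.Coprime n a ↔ Nat.Coprime n b := by
  unfold Nat.Coprime; rw [gcd_congr_mod h]

-- positive CRT
lemma crt_pos {a b : ℕ} (h : Nat.Coprime a b) (ha : 0 < a) (hb : 0 < b) (x y : ℕ) :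
    ∃ m : ℕ+, (m : ℕ) ≡ x [MOD a] ∧ (m : ℕ) ≡ y [MOD b] := by
  obtain ⟨k, hk1, hk2⟩ := Nat.chineseRemainder h x y
  refine ⟨⟨k + a * b, by positivity⟩, ?_, ?_⟩
  · exact (Nat.ModEq.trans (show (k + a * b) % a = k % a by
      simp [Nat.add_mul_mod_self_left]) hk1)
  · exact (Nat.ModEq.trans (show (k + a * b) % b = k % b by
      simp [mul_comm, Nat.add_mul_mod_self_left]) hk2)

lemma sigmaSet_open (n : ℕ+) : IsOpen[tauM] (sigmaSet n) :=
  TopologicalSpace.GenerateOpen.basic _ ⟨n, rfl⟩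

lemma open_basis {U : Set ℕ+} (h : IsOpen[tauM] U) :
    ∀ x ∈ U, ∃ n : ℕ+, Nat.Coprime (n : ℕ) (x : ℕ) ∧ sigmaSet n ⊆ U := by
  change TopologicalSpace.GenerateOpen _ U at h
  induction h with
  | basic s hs =>
      obtain ⟨n, rfl⟩ := hs
      exact fun x hx => ⟨n, hx, subset_rfl⟩
  | univ => exact fun x _ => ⟨1, Nat.coprime_one_left _, fun y _ => trivial⟩
  | inter s t _ _ ihs iht =>
      intro x hx
      obtain ⟨n, hn, hns⟩ := ihs x hx.1
      obtain ⟨m, hm, hmt⟩ := iht x hx.2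
      refine ⟨n * m, by push_cast; exact Nat.Coprime.mul hn hm, fun y hy => ?_⟩
      have hy' : Nat.Coprime ((n : ℕ) * (m : ℕ)) (y : ℕ) := by
        have : Nat.Coprime ((n * m : ℕ+) : ℕ) (y : ℕ) := hy
        rwa [PNat.mul_coe] at this
      exact ⟨hns ((Nat.coprime_mul_iff_left.mp hy').1),
        hmt ((Nat.coprime_mul_iff_left.mp hy').2)⟩
  | sUnion S _ ih =>
      rintro x ⟨s, hs, hxs⟩
      obtain ⟨n, hn, hns⟩ := ih s hs x hxs
      exact ⟨n, hn, hns.trans (Set.subset_sUnion_of_mem hs)⟩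

lemma preimage_sigma_open (f : ℕ+ → ℕ+)
    (h : ∀ p : ℕ+, (p : ℕ).Prime →
        f ⁻¹' sigmaSet p = sigmaSet p ∨ f ⁻¹' sigmaSet p = Set.univ ∨
          f ⁻¹' sigmaSet p = ∅) :
    ∀ n : ℕ+, IsOpen[tauM] (f ⁻¹' sigmaSet n) := by
  have key : ∀ N : ℕ, ∀ n : ℕ+, (n : ℕ) = N → IsOpen[tauM] (f ⁻¹' sigmaSet n) := by
    intro N
    induction N using Nat.strong_induction_on with
    | _ N ih =>
      intro n hn
      rcases eq_or_ne (n : ℕ) 1 with h1 | h1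
      · have huniv : sigmaSet n = Set.univ := Set.eq_univ_of_forall fun m => by
          show Nat.Coprime (n : ℕ) (m : ℕ)
          rw [h1]; exact Nat.coprime_one_left _
        rw [huniv, Set.preimage_univ]
        exact TopologicalSpace.GenerateOpen.univ
      by_cases hp : (n : ℕ).Prime
      · rcases h n hp with h' | h' | h' <;> rw [h']
        · exact sigmaSet_open n
        · exact TopologicalSpace.GenerateOpen.univ
        · exact @isOpen_empty _ tauM
      · have h2 : 2 ≤ (n : ℕ) := by have h0 : 0 < (n : ℕ) := n.pos; omega
        obtain ⟨a, hadvd, ha2, haN⟩ := Nat.exists_dvd_of_not_prime2 h2 hp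
        set b := (n : ℕ) / a with hbdef
        have hab : (n : ℕ) = a * b := (Nat.mul_div_cancel' hadvd).symm
        have hbpos : 0 < b := by
          rcases Nat.eq_zero_or_pos b with hb | hb
          · rw [hb, mul_zero] at hab; omega
          · exact hb
        have hb2 : 2 ≤ b := by nlinarith
        have hbN : b < (n : ℕ) := by nlinarith
        set A : ℕ+ := ⟨a, by omega⟩
        set B : ℕ+ := ⟨b, hbpos⟩
        have hsplit : sigmaSet n = sigmaSet A ∩ sigmaSet B := by
          ext m
          show Nat.Coprime (n : ℕ) (m : ℕ) ↔ _
          rw [hab, Nat.coprime_mul_iff_left]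
          exact Iff.rfl
        rw [hsplit, Set.preimage_inter]
        exact TopologicalSpace.GenerateOpen.inter _ _ (ih a (by omega) A rfl) (ih b (by omega) B rfl)
  exact fun n => key (n : ℕ) n rfl

theorem congr_preserving_continuous_iff (f : ℕ+ → ℕ+)
    (hcong : ∀ (n x y : ℕ+), (x : ℕ) ≡ (y : ℕ) [MOD (n : ℕ)] →
      (f x : ℕ) ≡ (f y : ℕ) [MOD (n : ℕ)]) :
    Continuous[tauM, tauM] f ↔
      ∀ p : ℕ+, (p : ℕ).Prime →
        f ⁻¹' sigmaSet p = sigmaSet p ∨ f ⁻¹' sigmaSet p = Set.univ ∨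
          f ⁻¹' sigmaSet p = ∅ := by
  constructor
  · intro hf p hp
    have hU : IsOpen[tauM] (f ⁻¹' sigmaSet p) :=
      @Continuous.isOpen_preimage _ _ tauM tauM f hf _ (sigmaSet_open p)
    by_cases hne : f ⁻¹' sigmaSet p = ∅
    · exact Or.inr (Or.inr hne)
    by_cases hpU : p ∈ f ⁻¹' sigmaSet p
    · -- preimage is everything
      refine Or.inr (Or.inl ?_)
      obtain ⟨n, hn, hns⟩ := open_basis hU p hpU
      apply Set.eq_univ_of_forall
      intro x
      obtain ⟨m, hm1, hm2⟩ := crt_pos hn n.2 p.2 1 (x : ℕ)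
      have hmU : m ∈ f ⁻¹' sigmaSet p := hns (show Nat.Coprime (n : ℕ) (m : ℕ) from
        (coprime_congr_mod hm1).mpr (Nat.coprime_one_right _))
      exact (coprime_congr_mod (hcong p m x hm2)).mp hmU
    · -- preimage is σ_p
      refine Or.inl ?_
      obtain ⟨y, hy⟩ := Set.nonempty_iff_ne_empty.mpr hne
      obtain ⟨n, hn, hns⟩ := open_basis hU y hy
      have hpn : (p : ℕ) ∣ (n : ℕ) := by
        by_contra hpn
        have hcop : Nat.Coprime (n : ℕ) (p : ℕ) :=
          ((Nat.Prime.coprime_iff_not_dvd hp).mpr hpn).symm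
        obtain ⟨m, hm1, hm2⟩ := crt_pos hcop n.2 p.2 1 0
        have hmU : m ∈ f ⁻¹' sigmaSet p := hns (show Nat.Coprime (n : ℕ) (m : ℕ) from
          (coprime_congr_mod hm1).mpr (Nat.coprime_one_right _))
        have hmp : (m : ℕ) ≡ (p : ℕ) [MOD (p : ℕ)] :=
          hm2.trans ((Nat.modEq_zero_iff_dvd).mpr dvd_rfl).symm
        exact hpU ((coprime_congr_mod (hcong p m p hmp)).mp hmU)
      ext x
      constructor
      · intro hx
        show Nat.Coprime (p : ℕ) (x : ℕ)
        rw [Nat.Prime.coprime_iff_not_dvd hp]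
        intro hdvd
        have hxp : (x : ℕ) ≡ (p : ℕ) [MOD (p : ℕ)] :=
          (Nat.modEq_zero_iff_dvd.mpr hdvd).trans (Nat.modEq_zero_iff_dvd.mpr dvd_rfl).symm
        exact hpU ((coprime_congr_mod (hcong p x p hxp)).mp hx)
      · intro hx
        have hx' : Nat.Coprime (p : ℕ) (x : ℕ) := hx
        set n' : ℕ := ordCompl[(p : ℕ)] (n : ℕ) with hn'def
        have hn0 : (n : ℕ) ≠ 0 := n.ne_zero
        have hpn' : ¬ (p : ℕ) ∣ n' := Nat.not_dvd_ordCompl hp hn0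
        have hcop : Nat.Coprime (p : ℕ) n' :=
          (Nat.Prime.coprime_iff_not_dvd hp).mpr hpn'
        have hn'pos : 0 < n' := Nat.ordCompl_pos _ hn0
        obtain ⟨m, hm1, hm2⟩ := crt_pos hcop p.2 hn'pos (x : ℕ) 1
        have hmn : Nat.Coprime (n : ℕ) (m : ℕ) := by
          have h1 : Nat.Coprime ((p : ℕ) ^ ((n : ℕ).factorization (p : ℕ))) (m : ℕ) :=
            Nat.Coprime.pow_left _ ((coprime_congr_mod hm1).mpr hx')
          have h2 : Nat.Coprime n' (m : ℕ) :=
            (coprime_congr_mod hm2).mpr (Nat.coprime_one_right _)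
          have hself := Nat.ordProj_mul_ordCompl_eq_self (n : ℕ) (p : ℕ)
          rw [← hself]
          exact Nat.Coprime.mul h1 h2
        have hmU : m ∈ f ⁻¹' sigmaSet p := hns hmn
        exact (coprime_congr_mod (hcong p m x hm1)).mp hmU
  · intro h
    rw [show Continuous[tauM, tauM] f ↔ _ from continuous_generateFrom_iff]
    rintro s ⟨n, rfl⟩
    exact preimage_sigma_open f h n
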